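/- arXiv:1904.01995 — 7 statements merged into one kernel-verified Lean document; each statement's English description precedes it below -/
import Mathlib

section
/- For n ≥ 1 and k ≥ 1, the number of tuples (a_1,...,a_n) of natural numbers with sum n·k and each a_i ≤ k(n-1) equals C(n(k+1)-1, n-1) - n·C(n+k-2, n-1). -/
/-!
There are `C(n(k+1)-1, n-1)` tuples of naturals summing to `nk`. Since `nk < 2(k(n-1)+1)` when
`n ≥ 2`, at most one entry of such a tuple exceeds `k(n-1)`, and subtracting `k(n-1)+1` from it
identifies the tuples where entry `i` is the large one with the tuples summing to `k-1`, of which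
there are `C(n+k-2, n-1)`.
-/

open Finset

section
variable {ι : Type*} [DecidableEq ι] [Fintype ι]

theorem card_piAntidiag_univ (s : ℕ) :
    #(piAntidiag (univ : Finset ι) s) = (Fintype.card ι + s - 1).choose s := by
  rw [← map_sym_eq_piAntidiag, card_map, sym_univ, card_univ, Sym.card_sym_eq_choose]

theorem map_addLeftEmbedding_single_piAntidiag_univ (i : ι) (s c : ℕ) :
    (piAntidiag (univ : Finset ι) s).map (addLeftEmbedding (Pi.single i c)) =
      {a ∈ piAntidiag (univ : Finset ι) (c + s) | c ≤ a i} := by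
  ext a
  simp only [mem_map, mem_filter, mem_piAntidiag, addLeftEmbedding_apply, ne_eq, mem_univ,
    implies_true, and_true]
  constructor
  · rintro ⟨b, rfl, rfl⟩
    simp [sum_add_distrib]
  · rintro ⟨hsum, hc⟩
    have hadd : Pi.single i c + (a - Pi.single i c) = a := by
      ext l
      rcases eq_or_ne l i with rfl | hl
      · simp [hc]
      · simp [hl]
    refine ⟨a - Pi.single i c, ?_, hadd⟩
    rw [← hadd] at hsum
    simpa [sum_add_distrib] using hsum

theorem card_filter_le_apply_piAntidiag_univ (i : ι) (s c : ℕ) :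
    #{a ∈ piAntidiag (univ : Finset ι) (c + s) | c ≤ a i} = #(piAntidiag (univ : Finset ι) s) := by
  rw [← map_addLeftEmbedding_single_piAntidiag_univ i, card_map]

theorem pairwiseDisjoint_filter_le_apply_piAntidiag_univ {s c : ℕ} (hs : s < c) :
    (Set.univ : Set ι).PairwiseDisjoint
      fun i ↦ {a ∈ piAntidiag (univ : Finset ι) (c + s) | c ≤ a i} := by
  intro i _ j _ hij
  simp only [Function.onFun, disjoint_left, mem_filter, mem_piAntidiag, not_and, not_le]
  rintro a ⟨⟨hsum, -⟩, hi⟩ -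
  have : a i + a j ≤ c + s := by
    rw [← hsum, ← sum_pair hij]
    exact sum_le_sum_of_subset (subset_univ _)
  omega

theorem card_filter_forall_lt_piAntidiag_univ_add {s c : ℕ} (hs : Nontrivial ι → s < c) :
    #{a ∈ piAntidiag (univ : Finset ι) (c + s) | ∀ i, a i < c} +
        Fintype.card ι * #(piAntidiag (univ : Finset ι) s) =
      #(piAntidiag (univ : Finset ι) (c + s)) := by
  have hbad : {a ∈ piAntidiag (univ : Finset ι) (c + s) | ¬∀ i, a i < c} =
      univ.biUnion fun i ↦ {a ∈ piAntidiag (univ : Finset ι) (c + s) | c ≤ a i} := by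
    ext a
    simp only [mem_filter, mem_biUnion, mem_univ, true_and, not_forall, not_lt]
    tauto
  have hdisj : ((univ : Finset ι) : Set ι).PairwiseDisjoint
      fun i ↦ {a ∈ piAntidiag (univ : Finset ι) (c + s) | c ≤ a i} := by
    rw [coe_univ]
    cases subsingleton_or_nontrivial ι with
    | inl _ => exact Set.subsingleton_univ.pairwise _
    | inr hι => exact pairwiseDisjoint_filter_le_apply_piAntidiag_univ (hs hι)
  rw [← card_filter_add_card_filter_not (s := piAntidiag univ (c + s)) (fun a ↦ ∀ i, a i < c),
    hbad, card_biUnion hdisj]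
  simp [card_filter_le_apply_piAntidiag_univ]

end

/-- For n ≥ 1, k ≥ 1, the number of tuples of naturals with sum n·k and each entry
≤ k(n-1) equals C(n(k+1)-1, n-1) - n·C(n+k-2, n-1). -/
theorem stmt_4 (n k : ℕ) (hn : 1 ≤ n) (hk : 1 ≤ k) :
    (Nat.card {a : Fin n → ℕ // (∑ i, a i = n * k) ∧ ∀ i, a i ≤ k * (n - 1)} : ℤ) =
      ((n * (k + 1) - 1).choose (n - 1) : ℤ) - n * ((n + k - 2).choose (n - 1)) := by
  have hsplit : k * (n - 1) + 1 + (k - 1) = n * k := by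
    obtain ⟨m, rfl⟩ := Nat.exists_eq_add_of_le hn
    obtain ⟨l, rfl⟩ := Nat.exists_eq_add_of_le hk
    simp only [Nat.add_sub_cancel_left]
    ring
  have hsmall : Nontrivial (Fin n) → k - 1 < k * (n - 1) + 1 := fun h ↦ by
    have := Nat.le_mul_of_pos_right k (Nat.sub_pos_of_lt (Fin.nontrivial_iff_two_le.mp h))
    omega
  have key := card_filter_forall_lt_piAntidiag_univ_add hsmall
  rw [card_piAntidiag_univ, card_piAntidiag_univ, Fintype.card_fin, hsplit,
    Nat.choose_symm_of_eq_add (show n + (k - 1) - 1 = k - 1 + (n - 1) by omega),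
    Nat.choose_symm_of_eq_add (show n + n * k - 1 = n * k + (n - 1) by omega),
    show n + (k - 1) - 1 = n + k - 2 by omega,
    show n + n * k - 1 = n * (k + 1) - 1 by rw [mul_add_one]; omega] at key
  -- Restating the filter of `key` for `Fin n` would pick a different decidability instance.
  have hcount : Nat.card {a : Fin n → ℕ // (∑ i, a i = n * k) ∧ ∀ i, a i ≤ k * (n - 1)} +
      n * (n + k - 2).choose (n - 1) = (n * (k + 1) - 1).choose (n - 1) := by
    rw [← key, ← Nat.card_eq_finsetCard]
    congr 1
    exact Nat.card_congr <| Equiv.subtypeEquivRight fun a ↦ by simp [mem_piAntidiag]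
  rw [eq_sub_iff_add_eq]
  exact_mod_cast hcount
end

section
/- Let I ⊂ k[x_1,...,x_n] be the ideal generated by all square-free monomials of degree d. If a monomial f = x_1^{b_1}···x_n^{b_n} satisfies f ∉ I^k but f·x_i ∈ I^k for all i, then f has degree exactly dk - 1 and all exponents b_i < k. Conversely, every monomial of degree dk-1 with all exponents < k has this property. Hence Soc(S/I^k) is spanned by such monomials. -/
/-!
A monomial `x^b` lies in `I^k` iff `b` dominates an exponent `e` of degree `d * k` with all
`e i ≤ k`. Such `e` are exactly the sums of `k` indicator vectors of `d`-subsets: a `d`-subset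
containing every index where `e` attains `k` and contained in the support of `e` can always be
peeled off. So if `x^b ∉ I^k` but every `x^b x_i ∈ I^k`, then `b i < k` (otherwise a generator
dividing `x^b x_i` already divides `x^b`) and `deg b = d * k - 1`. As `I^k` is a monomial
ideal, every monomial of a socle element is either in `I^k` or itself a socle monomial.
-/

open MvPolynomial

/-- The ideal generated by all square-free monomials of degree d in k[x_1,...,x_n]. -/
noncomputable def sqfreeIdeal (K : Type) [Field K] (n d : ℕ) : Ideal (MvPolynomial (Fin n) K) :=
  Ideal.span {f : MvPolynomial (Fin n) K | ∃ s : Finset (Fin n), s.card = d ∧ f = ∏ i ∈ s, X i}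

section Exponents

variable {σ : Type*}

def sqfreePowExponents (d k : ℕ) : Set (σ →₀ ℕ) := {e | (∀ i, e i ≤ k) ∧ e.degree = d * k}

lemma Finsupp.degree_indicator_one (s : Finset σ) :
    (Finsupp.indicator s fun _ _ => 1 : σ →₀ ℕ).degree = s.card := by
  rw [Finsupp.degree_apply, Finset.sum_subset (Finsupp.support_indicator_subset _ _)
    fun _ _ hi => Finsupp.notMem_support_iff.1 hi,
    Finset.sum_congr rfl fun i hi => Finsupp.indicator_of_mem hi _, Finset.card_eq_sum_ones]

lemma add_indicator_mem_sqfreePowExponents {d k : ℕ} {e : σ →₀ ℕ}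
    (he : e ∈ sqfreePowExponents d k) {s : Finset σ} (hs : s.card = d) :
    e + Finsupp.indicator s (fun _ _ => 1) ∈ sqfreePowExponents d (k + 1) := by
  classical
  obtain ⟨hle, hdeg⟩ := he
  refine ⟨fun i => ?_, ?_⟩
  · have := hle i
    rw [Finsupp.add_apply, Finsupp.indicator_apply]
    split <;> omega
  · rw [map_add, hdeg, Finsupp.degree_indicator_one, hs, Nat.mul_succ]

/-- The set `s` is chosen between the indices where `e` attains `k + 1` (at most `d` of them)
and the support of `e` (at least `d` elements), both bounds coming from `deg e = d * (k + 1)`. -/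
lemma exists_indicator_le_of_mem_sqfreePowExponents_succ {d k : ℕ} {e : σ →₀ ℕ}
    (he : e ∈ sqfreePowExponents d (k + 1)) :
    ∃ s : Finset σ, s.card = d ∧ Finsupp.indicator s (fun _ _ => 1) ≤ e ∧
      e - Finsupp.indicator s (fun _ _ => 1) ∈ sqfreePowExponents d k := by
  classical
  obtain ⟨hle, hdeg⟩ := he
  set T := e.support.filter (fun i => e i = k + 1)
  have hT : T.card ≤ d := by
    have : T.card • (k + 1) ≤ e.degree := by
      rw [Finsupp.degree_apply]
      calc T.card • (k + 1) = ∑ i ∈ T, e i := by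
            rw [Finset.sum_congr rfl fun i hi => (Finset.mem_filter.1 hi).2, Finset.sum_const]
        _ ≤ ∑ i ∈ e.support, e i := Finset.sum_le_sum_of_subset (Finset.filter_subset _ _)
    rw [hdeg, smul_eq_mul] at this
    exact Nat.le_of_mul_le_mul_right this k.succ_pos
  have hU : d ≤ e.support.card := by
    have : e.degree ≤ e.support.card • (k + 1) :=
      Finset.sum_le_card_nsmul _ _ _ fun i _ => hle i
    rw [hdeg, smul_eq_mul] at this
    exact Nat.le_of_mul_le_mul_right this k.succ_pos
  obtain ⟨s, hTs, hsU, hs⟩ := Finset.exists_subsuperset_card_eq (Finset.filter_subset _ _) hT hU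
  have hind : Finsupp.indicator s (fun _ _ => 1) ≤ e := fun i => by
    rw [Finsupp.indicator_apply]
    split
    · exact Nat.one_le_iff_ne_zero.2 (Finsupp.mem_support_iff.1 (hsU ‹_›))
    · exact Nat.zero_le _
  refine ⟨s, hs, hind, fun i => ?_, ?_⟩
  · rw [Finsupp.tsub_apply, Finsupp.indicator_apply]
    split
    · have := hle i; omega
    · have : e i ≠ k + 1 := fun h => ‹i ∉ s› (hTs (by simp [h]))
      have := hle i; omega
  · have := congrArg Finsupp.degree (tsub_add_cancel_of_le hind)
    rw [map_add, Finsupp.degree_indicator_one, hs, hdeg, Nat.mul_succ] at this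
    omega

lemma sqfreePowExponents_zero (d : ℕ) : (sqfreePowExponents d 0 : Set (σ →₀ ℕ)) = {0} := by
  ext e
  simp only [sqfreePowExponents, nonpos_iff_eq_zero, mul_zero, Set.mem_ofPred_eq,
    Set.mem_singleton_iff]
  exact ⟨fun h => Finsupp.ext h.1, fun h => by simp [h]⟩

lemma sqfreePowExponents_socle_iff [Nonempty σ] {d k : ℕ} (hdk : 0 < d * k) (b : σ →₀ ℕ) :
    ((¬∃ e ∈ sqfreePowExponents d k, e ≤ b) ∧
        ∀ i, ∃ e ∈ sqfreePowExponents d k, e ≤ b + Finsupp.single i 1) ↔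
      b.degree = d * k - 1 ∧ ∀ i, b i < k := by
  classical
  constructor
  · rintro ⟨hb, hbX⟩
    have hlt : ∀ i, b i < k := by
      intro i
      by_contra! hki
      obtain ⟨e, he, hle⟩ := hbX i
      refine hb ⟨e, he, fun j => ?_⟩
      have := hle j
      rw [Finsupp.add_apply, Finsupp.single_apply] at this
      split_ifs at this with hij
      · exact hij ▸ (he.1 i).trans hki
      · simpa using this
    have hdeg_lt : b.degree < d * k := by
      by_contra! h
      obtain ⟨e, hle, hdeg⟩ := Finsupp.exists_le_degree_eq b _ h
      exact hb ⟨e, ⟨fun i => (hle i).trans (hlt i).le, hdeg⟩, hle⟩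
    obtain ⟨e, ⟨-, hdeg⟩, hle⟩ := hbX (Classical.arbitrary σ)
    have := Finsupp.degree_mono hle
    rw [map_add, Finsupp.degree_single, hdeg] at this
    exact ⟨by omega, hlt⟩
  · rintro ⟨hdeg, hlt⟩
    refine ⟨fun ⟨e, he, hle⟩ => ?_, fun i => ⟨_, ⟨fun j => ?_, ?_⟩, le_rfl⟩⟩
    · have := Finsupp.degree_mono hle
      have := he.2
      omega
    · rw [Finsupp.add_apply, Finsupp.single_apply]
      have := hlt j
      split <;> omega
    · rw [map_add, Finsupp.degree_single, hdeg]
      omega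

end Exponents

section MonomialIdeal

variable {σ R : Type*} [CommSemiring R] {s : Set (σ →₀ ℕ)}

lemma prod_X_eq_monomial_indicator (t : Finset σ) :
    ∏ i ∈ t, (X i : MvPolynomial σ R) = monomial (Finsupp.indicator t fun _ _ => 1) 1 := by
  simpa using prod_X_pow (R := R) (fun _ => 1) t

lemma monomial_mem_span_monomial_image_of_mem_support {p : MvPolynomial σ R}
    (hp : p ∈ Ideal.span ((fun e => monomial e (1 : R)) '' s)) {b : σ →₀ ℕ} (hb : b ∈ p.support) :
    monomial b (1 : R) ∈ Ideal.span ((fun e => monomial e (1 : R)) '' s) :=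
  mem_ideal_span_monomial_image.2 fun _ hx =>
    Finset.mem_singleton.1 (support_monomial_subset hx) ▸ mem_ideal_span_monomial_image.1 hp b hb

lemma monomial_mul_X_mem_span_monomial_image {p : MvPolynomial σ R} {i : σ}
    (hp : X i * p ∈ Ideal.span ((fun e => monomial e (1 : R)) '' s)) {b : σ →₀ ℕ}
    (hb : b ∈ p.support) :
    monomial b (1 : R) * X i ∈ Ideal.span ((fun e => monomial e (1 : R)) '' s) := by
  rw [X, monomial_mul, mul_one, add_comm]
  refine monomial_mem_span_monomial_image_of_mem_support hp ?_
  rwa [mem_support_iff, coeff_X_mul, ← mem_support_iff]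

lemma monomial_mem_span_monomial_image_iff [Nontrivial R] {b : σ →₀ ℕ} :
    monomial b (1 : R) ∈ Ideal.span ((fun e => monomial e (1 : R)) '' s) ↔ ∃ e ∈ s, e ≤ b := by
  classical
  rw [mem_ideal_span_monomial_image, support_monomial, if_neg one_ne_zero]
  simp

end MonomialIdeal

section SqfreeIdeal

variable {K : Type} [Field K] {n d : ℕ}

lemma sqfreeIdeal_pow_eq_span (k : ℕ) :
    sqfreeIdeal K n d ^ k =
      Ideal.span ((fun e => monomial e (1 : K)) '' sqfreePowExponents d k) := by
  induction k with
  | zero =>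
    rw [pow_zero, sqfreePowExponents_zero, Set.image_singleton, ← one_def,
      Ideal.span_singleton_one, Ideal.one_eq_top]
  | succ k ih =>
    refine le_antisymm ?_ ?_
    · rw [pow_succ, ih, sqfreeIdeal, Ideal.span_mul_span', Ideal.span_le]
      rintro _ ⟨_, ⟨e, he, rfl⟩, _, ⟨s, hs, rfl⟩, rfl⟩
      dsimp only
      rw [prod_X_eq_monomial_indicator, monomial_mul, one_mul]
      exact Ideal.subset_span ⟨_, add_indicator_mem_sqfreePowExponents he hs, rfl⟩
    · rw [Ideal.span_le]
      rintro _ ⟨e, he, rfl⟩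
      obtain ⟨s, hs, hle, hsub⟩ := exists_indicator_le_of_mem_sqfreePowExponents_succ he
      have hsplit : monomial e (1 : K) =
          monomial (e - Finsupp.indicator s fun _ _ => 1) 1 * ∏ i ∈ s, X i := by
        rw [prod_X_eq_monomial_indicator, monomial_mul, one_mul, tsub_add_cancel_of_le hle]
      change monomial e (1 : K) ∈ sqfreeIdeal K n d ^ (k + 1)
      rw [hsplit, pow_succ, ih]
      exact Ideal.mul_mem_mul (Ideal.subset_span ⟨_, hsub, rfl⟩) (Ideal.subset_span ⟨s, hs, rfl⟩)

lemma monomial_mem_sqfreeIdeal_pow_iff (k : ℕ) (b : Fin n →₀ ℕ) :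
    monomial b (1 : K) ∈ sqfreeIdeal K n d ^ k ↔ ∃ e ∈ sqfreePowExponents d k, e ≤ b := by
  rw [sqfreeIdeal_pow_eq_span, monomial_mem_span_monomial_image_iff]

lemma monomial_notMem_and_mul_X_mem_sqfreeIdeal_pow_iff {k : ℕ} (hd : 1 ≤ d) (hdn : d ≤ n)
    (hk : 1 ≤ k) (b : Fin n →₀ ℕ) :
    (monomial b (1 : K) ∉ sqfreeIdeal K n d ^ k ∧
        ∀ i, monomial b (1 : K) * X i ∈ sqfreeIdeal K n d ^ k) ↔
      (∑ i, b i = d * k - 1) ∧ ∀ i, b i < k := by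
  have : Nonempty (Fin n) := ⟨⟨0, by omega⟩⟩
  simp only [X, monomial_mul, mul_one, monomial_mem_sqfreeIdeal_pow_iff, ← Finsupp.degree_eq_sum]
  exact sqfreePowExponents_socle_iff (Nat.mul_pos hd hk) b

end SqfreeIdeal

lemma Ideal.Quotient.mk_mem_of_forall_mem_support {σ K : Type*} [CommRing K]
    {I : Ideal (MvPolynomial σ K)} {M : Submodule K (MvPolynomial σ K ⧸ I)} {p : MvPolynomial σ K}
    (h : ∀ b ∈ p.support, Ideal.Quotient.mk I (monomial b 1) ∈ M) :
    Ideal.Quotient.mk I p ∈ M := by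
  rw [← support_sum_monomial_coeff p, map_sum]
  refine Submodule.sum_mem _ fun b hb => ?_
  rw [← mul_one (p.coeff b), ← smul_eq_mul, ← smul_monomial, ← Ideal.Quotient.mkₐ_eq_mk K,
    map_smul]
  exact M.smul_mem _ (h b hb)

theorem span_socle_monomials_eq_iInf_ker {K : Type} [Field K] {n d k : ℕ} (hd : 1 ≤ d)
    (hdn : d ≤ n) (hk : 1 ≤ k) :
    Submodule.span K {g : MvPolynomial (Fin n) K ⧸ sqfreeIdeal K n d ^ k |
        ∃ b : Fin n →₀ ℕ, (∑ i, b i = d * k - 1) ∧ (∀ i, b i < k) ∧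
          g = Ideal.Quotient.mk (sqfreeIdeal K n d ^ k) (monomial b 1)} =
      ⨅ i : Fin n, LinearMap.ker
        (LinearMap.mulLeft K (Ideal.Quotient.mk (sqfreeIdeal K n d ^ k) (X i))) := by
  have hker : ∀ p, Ideal.Quotient.mk (sqfreeIdeal K n d ^ k) p ∈ ⨅ i : Fin n, LinearMap.ker
      (LinearMap.mulLeft K (Ideal.Quotient.mk (sqfreeIdeal K n d ^ k) (X i))) ↔
      ∀ i, X i * p ∈ sqfreeIdeal K n d ^ k := by
    intro p
    simp only [Submodule.mem_iInf, LinearMap.mem_ker, LinearMap.mulLeft_apply, ← map_mul,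
      Ideal.Quotient.eq_zero_iff_mem]
  have hiff := monomial_notMem_and_mul_X_mem_sqfreeIdeal_pow_iff (K := K) hd hdn hk
  refine le_antisymm (Submodule.span_le.2 ?_) fun g hg => ?_
  · rintro _ ⟨b, hdeg, hlt, rfl⟩
    rw [SetLike.mem_coe, hker]
    intro i
    rw [mul_comm]
    exact ((hiff b).2 ⟨hdeg, hlt⟩).2 i
  · obtain ⟨p, rfl⟩ := Ideal.Quotient.mk_surjective g
    rw [hker, sqfreeIdeal_pow_eq_span] at hg
    refine Ideal.Quotient.mk_mem_of_forall_mem_support fun b hb => ?_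
    by_cases hbI : monomial b 1 ∈ sqfreeIdeal K n d ^ k
    · rw [Ideal.Quotient.eq_zero_iff_mem.2 hbI]
      exact zero_mem _
    · have hbX : ∀ i, monomial b 1 * X i ∈ sqfreeIdeal K n d ^ k := fun i => by
        rw [sqfreeIdeal_pow_eq_span]
        exact monomial_mul_X_mem_span_monomial_image (hg i) hb
      obtain ⟨hdeg, hlt⟩ := (hiff b).1 ⟨hbI, hbX⟩
      exact Submodule.subset_span ⟨b, hdeg, hlt, rfl⟩

/-- Let I be generated by all square-free monomials of degree d. A monomial x^b satisfies
x^b ∉ I^k and x^b·x_i ∈ I^k for all i, iff it has degree dk-1 and all exponents < k; hence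
Soc(S/I^k) is spanned by (the classes of) these monomials. -/
theorem stmt_11 (K : Type) [Field K] (n d k : ℕ) (hd : 1 ≤ d) (hdn : d ≤ n) (hk : 1 ≤ k) :
    (∀ b : Fin n →₀ ℕ,
      ((monomial b (1 : K) ∉ (sqfreeIdeal K n d) ^ k ∧
          ∀ i : Fin n, monomial b (1 : K) * X i ∈ (sqfreeIdeal K n d) ^ k) ↔
        ((∑ i, b i = d * k - 1) ∧ ∀ i, b i < k))) ∧
    Submodule.span K {g : MvPolynomial (Fin n) K ⧸ (sqfreeIdeal K n d) ^ k |
        ∃ b : Fin n →₀ ℕ, (∑ i, b i = d * k - 1) ∧ (∀ i, b i < k) ∧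
          g = Ideal.Quotient.mk ((sqfreeIdeal K n d) ^ k) (monomial b 1)} =
      ⨅ i : Fin n, LinearMap.ker
        (LinearMap.mulLeft K (Ideal.Quotient.mk ((sqfreeIdeal K n d) ^ k) (X i))) :=
  ⟨monomial_notMem_and_mul_X_mem_sqfreeIdeal_pow_iff hd hdn hk,
    span_socle_monomials_eq_iInf_ker hd hdn hk⟩
end

section
/- Let I be the ideal generated by all square-free monomials of degree d in k[x_1,...,x_n]. Then for every k ≥ 1, I^k is generated by exactly those monomials x_1^{a_1}···x_n^{a_n} of degree dk satisfying a_i ≤ k for all i. -/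
/-!
Encode a monomial by its exponent vector. Since `span (monomial '' A) * span (monomial '' B)` is
`span (monomial '' (A + B))`, it suffices to split every exponent vector `a` of degree `d (k + 1)`
with entries `≤ k + 1` as `a = b + e` with `b` of degree `d k` and entries `≤ k` and `e` the
indicator of a `d`-set `s`. Take `s` between `{i | a i = k + 1}` and the support of `a`: counting
degrees, the former has at most `d` elements and the latter at least `d`.
-/

open MvPolynomial Finsupp
open scoped Pointwise

namespace SquarefreeVeronese

variable {σ : Type*}

def boundedExponents (m b : ℕ) : Set (σ →₀ ℕ) := {a | a.degree = m ∧ ∀ i, a i ≤ b}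

lemma boundedExponents_zero (b : ℕ) : boundedExponents (σ := σ) 0 b = {0} := by
  ext a
  simp only [boundedExponents, degree_eq_zero_iff, Set.mem_ofPred_eq, Set.mem_singleton_iff]
  exact ⟨And.left, by rintro rfl; simp⟩

lemma sum_single_one_mem_boundedExponents [DecidableEq σ] (s : Finset σ) :
    ∑ i ∈ s, single i 1 ∈ boundedExponents (σ := σ) s.card 1 := by
  refine ⟨by simp [map_sum, degree_single], fun j => ?_⟩
  rw [finsetSum_apply]
  simp only [single_apply, Finset.sum_ite_eq']
  split <;> omega

lemma eq_sum_single_one_of_le_one {a : σ →₀ ℕ} (ha : ∀ i, a i ≤ 1) :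
    a = ∑ i ∈ a.support, single i 1 := by
  conv_lhs => rw [← a.sum_single]
  refine Finset.sum_congr rfl fun i hi => ?_
  have := ha i
  rw [show a i = 1 by grind]

lemma setOf_prod_X_eq_image (R : Type*) [CommSemiring R] (d : ℕ) :
    {f : MvPolynomial σ R | ∃ s : Finset σ, s.card = d ∧ f = ∏ i ∈ s, X i} =
      (monomial · 1) '' boundedExponents d 1 := by
  classical
  ext f
  constructor
  · rintro ⟨s, rfl, rfl⟩
    exact ⟨_, sum_single_one_mem_boundedExponents s, monomial_sum_one s _⟩
  · rintro ⟨a, ⟨hdeg, hle⟩, rfl⟩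
    obtain ⟨s, rfl⟩ : ∃ s : Finset σ, a = ∑ i ∈ s, single i 1 :=
      ⟨_, eq_sum_single_one_of_le_one hle⟩
    exact ⟨s, (sum_single_one_mem_boundedExponents s).1.symm.trans hdeg,
      monomial_sum_one s _⟩

lemma setOf_monomial_eq_image [Fintype σ] (R : Type*) [CommSemiring R] (m b : ℕ) :
    {f : MvPolynomial σ R | ∃ a : σ →₀ ℕ, (∑ i, a i = m) ∧ (∀ i, a i ≤ b) ∧ f = monomial a 1} =
      (monomial · 1) '' boundedExponents m b := by
  ext f
  simp [boundedExponents, degree_eq_sum, eq_comm, and_assoc]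

lemma exists_finset_of_mem_boundedExponents {d k : ℕ} {a : σ →₀ ℕ}
    (ha : a ∈ boundedExponents (d * (k + 1)) (k + 1)) :
    ∃ s : Finset σ, s.card = d ∧ {i | a i = k + 1} ⊆ s ∧ s ⊆ a.support := by
  classical
  obtain ⟨hdeg, hle⟩ := ha
  set E := {i ∈ a.support | a i = k + 1}
  have hE : E ⊆ a.support := Finset.filter_subset _ _
  have hEcard : E.card ≤ d := by
    refine Nat.le_of_mul_le_mul_right ?_ k.succ_pos
    calc E.card * (k + 1) = ∑ i ∈ E, a i := (Finset.sum_const_nat fun i hi => by grind).symm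
      _ ≤ a.degree := Finset.sum_le_sum_of_subset hE
      _ = d * (k + 1) := hdeg
  have hsupp : d ≤ a.support.card := by
    refine Nat.le_of_mul_le_mul_right ?_ k.succ_pos
    calc d * (k + 1) = a.degree := hdeg.symm
      _ ≤ a.support.card • (k + 1) := Finset.sum_le_card_nsmul _ _ _ fun i _ => hle i
      _ = a.support.card * (k + 1) := smul_eq_mul _ _
  obtain ⟨s, hEs, hs, hcard⟩ := Finset.exists_subsuperset_card_eq hE hEcard hsupp
  refine ⟨s, hcard, fun i hi => hEs ?_, hs⟩
  grind

lemma boundedExponents_add_boundedExponents_one (d k : ℕ) :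
    boundedExponents (σ := σ) (d * k) k + boundedExponents (σ := σ) d 1 =
      boundedExponents (d * (k + 1)) (k + 1) := by
  classical
  ext a
  constructor
  · rintro ⟨b, ⟨hb, hbk⟩, e, ⟨he, he1⟩, rfl⟩
    refine ⟨by rw [map_add, hb, he]; ring, fun i => ?_⟩
    have := hbk i
    have := he1 i
    rw [Finsupp.add_apply]
    omega
  · intro ha
    obtain ⟨s, hcard, hmax, hsupp⟩ := exists_finset_of_mem_boundedExponents ha
    obtain ⟨hdeg, hle⟩ := ha
    set e : σ →₀ ℕ := ∑ i ∈ s, single i 1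
    obtain ⟨he, he1⟩ := hcard ▸ sum_single_one_mem_boundedExponents s
    have he_apply (i : σ) : e i = if i ∈ s then 1 else 0 := by
      simp [e, finsetSum_apply, single_apply]
    have hea : e ≤ a := fun i => by
      rw [he_apply]
      split_ifs with hi
      · exact Nat.one_le_iff_ne_zero.2 (Finsupp.mem_support_iff.1 (hsupp hi))
      · exact Nat.zero_le _
    refine ⟨a - e, ⟨?_, fun i => ?_⟩, e, ⟨he, he1⟩, tsub_add_cancel_of_le hea⟩
    · have := congrArg degree (tsub_add_cancel_of_le hea)
      rw [map_add, he, hdeg] at this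
      rw [Nat.eq_sub_of_add_eq this, mul_add, mul_one, Nat.add_sub_cancel]
    · have := hle i
      have := @hmax i
      rw [tsub_apply, he_apply]
      split_ifs <;> grind

variable {R : Type*} [CommSemiring R]

lemma span_monomial_image_mul (A B : Set (σ →₀ ℕ)) :
    Ideal.span ((monomial · (1 : R)) '' A) * Ideal.span ((monomial · 1) '' B) =
      Ideal.span ((monomial · 1) '' (A + B)) := by
  rw [Ideal.span_mul_span', ← Set.image2_mul, ← Set.image2_add, Set.image_image2,
    Set.image2_image_left, Set.image2_image_right]
  simp only [monomial_mul, mul_one]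

lemma span_monomial_image_boundedExponents_one_pow (d k : ℕ) :
    Ideal.span ((monomial · (1 : R)) '' boundedExponents (σ := σ) d 1) ^ k =
      Ideal.span ((monomial · 1) '' boundedExponents (d * k) k) := by
  induction k with
  | zero => simp [boundedExponents_zero]
  | succ k ih =>
    rw [pow_succ, ih, span_monomial_image_mul, boundedExponents_add_boundedExponents_one]

end SquarefreeVeronese

theorem stmt_12_general (K : Type*) [Field K] (n d k : ℕ) :
    (Ideal.span {f : MvPolynomial (Fin n) K |
        ∃ s : Finset (Fin n), s.card = d ∧ f = ∏ i ∈ s, X i}) ^ k =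
      Ideal.span {f : MvPolynomial (Fin n) K |
        ∃ a : Fin n →₀ ℕ, (∑ i, a i = d * k) ∧ (∀ i, a i ≤ k) ∧ f = monomial a 1} := by
  open SquarefreeVeronese in
  rw [setOf_prod_X_eq_image, setOf_monomial_eq_image, span_monomial_image_boundedExponents_one_pow]

/-- If I is the ideal generated by all square-free monomials of degree d in n variables,
then I^k is generated by exactly the monomials of degree d*k with all exponents ≤ k. -/
theorem stmt_12 (K : Type*) [Field K] (n d k : ℕ) (hd : 1 ≤ d) (hdn : d ≤ n) (hk : 1 ≤ k) :
    (Ideal.span {f : MvPolynomial (Fin n) K |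
        ∃ s : Finset (Fin n), s.card = d ∧ f = ∏ i ∈ s, X i}) ^ k =
      Ideal.span {f : MvPolynomial (Fin n) K |
        ∃ a : Fin n →₀ ℕ, (∑ i, a i = d * k) ∧ (∀ i, a i ≤ k) ∧ f = monomial a 1} :=
  stmt_12_general K n d k
end

section
/- Let I be the product over all (n-1)-element subsets {i_1,...,i_{n-1}} of {1,...,n} of the ideals (x_{i_1},...,x_{i_{n-1}}) in k[x_1,...,x_n]. Then I is generated by all monomials of degree n except the pure powers x_1^n,...,x_n^n. -/
/-!
The `(n-1)`-subsets are the complements of the singletons `{j}`, so the product ideal is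
spanned by the monomials `∏ⱼ x_{c(j)}` with `c(j) ≠ j`, whose exponent vector `a` counts the
fibres of `c`. Such an `a` has degree `n` and no entry equal to `n`. Conversely, for such an
`a` pick any `v` with fibre sizes `a`; since `v` is not constant, Hall's theorem gives a
permutation `g` with `g s ≠ v s` for all `s`, and `c = v ∘ g⁻¹` is fixed-point free with the
same fibres.
-/

open MvPolynomial Finset

theorem Finset.prod_filter_card_eq_card_sub_one {α M : Type*} [Fintype α] [DecidableEq α]
    [Nonempty α] [CommMonoid M] (f : Finset α → M) :
    ∏ s ∈ univ.filter (fun s : Finset α => #s = Fintype.card α - 1), f s =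
      ∏ j, f {j}ᶜ := by
  refine (prod_nbij (fun j => ({j}ᶜ : Finset α)) (fun j _ => ?_) (fun j _ k _ h => ?_)
    (fun s hs => ?_) (fun _ _ => rfl)).symm
  · simp [card_compl]
  · simpa using h
  · have := Fintype.card_pos (α := α)
    obtain ⟨j, hj⟩ : ∃ j, sᶜ = {j} := card_eq_one.mp (by simp_all [card_compl]; omega)
    exact ⟨j, mem_coe.mpr (mem_univ j), by simp [← hj]⟩

theorem MvPolynomial.prod_span_X_image {R σ ι : Type*} [CommSemiring R] [Fintype ι]
    (S : ι → Set σ) :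
    ∏ j, Ideal.span ((fun i => (X i : MvPolynomial σ R)) '' S j) =
      Ideal.span {f | ∃ c : ι → σ, (∀ j, c j ∈ S j) ∧
        f = monomial (∑ j, Finsupp.single (c j) 1) 1} := by
  classical
  rw [Ideal.prod_span]
  congr 1
  ext f
  simp only [Set.mem_finsetProd, Set.mem_image, mem_univ, forall_const, Set.mem_ofPred_eq]
  constructor
  · rintro ⟨g, hg, rfl⟩
    choose c hcS hcg using fun j => @hg j
    refine ⟨c, hcS, ?_⟩
    simp [monomial_sum_one, ← hcg, X]
  · rintro ⟨c, hcS, rfl⟩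
    exact ⟨fun j => X (c j), fun {j} => ⟨c j, hcS j, rfl⟩, by simp [monomial_sum_one, X]⟩

theorem Multiset.exists_map_univ_eq {ι σ : Type*} [Fintype ι] (m : Multiset σ)
    (h : Fintype.card ι = card m) : ∃ v : ι → σ, univ.val.map v = m := by
  let e := Fintype.equivFinOfCardEq (h.trans (length_toList m).symm)
  refine ⟨m.toList.get ∘ e, ?_⟩
  rw [← Multiset.map_map, map_univ_val_equiv, Fin.univ_val_map, List.ofFn_get, coe_toList]

theorem Finsupp.exists_sum_single_eq {ι σ : Type*} [Fintype ι] (a : σ →₀ ℕ)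
    (h : Fintype.card ι = a.sum fun _ => id) : ∃ v : ι → σ, ∑ j, single (v j) 1 = a := by
  classical
  obtain ⟨v, hv⟩ := (toMultiset a).exists_map_univ_eq (h.trans (card_toMultiset a).symm)
  refine ⟨v, ?_⟩
  rw [← toMultiset_toFinsupp a, ← hv, ← Multiset.sum_map_singleton (univ.val.map v),
    map_multiset_sum]
  simp

theorem Finsupp.sum_single_one_apply {ι σ : Type*} [Fintype ι] [DecidableEq σ] (c : ι → σ)
    (i : σ) : (∑ j, single (c j) 1 : σ →₀ ℕ) i = #{j | c j = i} := by
  simp [finsetSum_apply, single_apply]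

theorem Equiv.Perm.exists_forall_apply_ne {α : Type*} [Fintype α] [DecidableEq α] (v : α → α)
    (hv : ∀ p, ∃ s, v s ≠ p) : ∃ g : Equiv.Perm α, ∀ s, g s ≠ v s := by
  have hall : ∀ S : Finset α, #S ≤ #(S.biUnion fun s => univ.erase (v s)) := by
    intro S
    by_cases hS : S = univ
    · have hcover : (univ.biUnion fun s => univ.erase (v s)) = univ :=
        eq_univ_of_forall fun p =>
          let ⟨s, hs⟩ := hv p
          mem_biUnion.mpr ⟨s, mem_univ s, mem_erase.mpr ⟨hs.symm, mem_univ p⟩⟩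
      rw [hS, hcover]
    obtain rfl | ⟨s₀, hs₀⟩ := S.eq_empty_or_nonempty
    · simp
    calc #S ≤ Fintype.card α - 1 := Nat.le_sub_one_of_lt ((card_lt_iff_ne_univ S).mpr hS)
      _ = #(univ.erase (v s₀)) := by rw [card_erase_of_mem (mem_univ _), card_univ]
      _ ≤ _ := subset_biUnion_of_mem (fun s => univ.erase (v s)) hs₀ |> card_le_card
  obtain ⟨g, hg, hgv⟩ := (all_card_le_biUnion_card_iff_exists_injective _).mp hall
  exact ⟨Equiv.ofBijective g (Finite.injective_iff_bijective.mp hg),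
    fun s => (mem_erase.mp (hgv s)).1⟩

theorem Finsupp.exists_ne_self_sum_single_eq_iff {σ : Type*} [Fintype σ] [DecidableEq σ]
    (a : σ →₀ ℕ) :
    (∃ c : σ → σ, (∀ j, c j ≠ j) ∧ ∑ j, single (c j) 1 = a) ↔
      (∑ i, a i = Fintype.card σ ∧ ∀ i, a i ≠ Fintype.card σ) := by
  constructor
  · rintro ⟨c, hc, rfl⟩
    simp only [sum_single_one_apply]
    refine ⟨(card_eq_sum_card_fiberwise fun j _ => mem_univ (c j)).symm, fun i => ?_⟩
    exact (card_lt_univ_of_notMem (x := i) (by simpa using hc i)).ne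
  · rintro ⟨hsum, hne⟩
    obtain ⟨v, hv⟩ := exists_sum_single_eq (ι := σ) a <| by
      rw [sum_fintype _ _ fun _ => rfl]; exact hsum.symm
    have hv_nonconst : ∀ p, ∃ s, v s ≠ p := by
      by_contra! ⟨p, hp⟩
      refine hne p ?_
      rw [← hv, sum_single_one_apply, filter_true_of_mem fun s _ => hp s, card_univ]
    obtain ⟨g, hg⟩ := Equiv.Perm.exists_forall_apply_ne v hv_nonconst
    refine ⟨v ∘ g.symm, fun j => ?_, ?_⟩
    · simpa using (hg (g.symm j)).symm
    · rw [← hv]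
      exact g.symm.sum_comp fun s => single (v s) 1

/-- The product over all (n-1)-element subsets of the variables of the ideals generated by
those variables is generated by all monomials of degree n except the pure powers x_i^n. -/
theorem stmt_13 (K : Type*) [Field K] (n : ℕ) (hn : 2 ≤ n) :
    (∏ s ∈ Finset.univ.filter (fun s : Finset (Fin n) => s.card = n - 1),
        Ideal.span ((fun i => (X i : MvPolynomial (Fin n) K)) '' (s : Set (Fin n)))) =
      Ideal.span {f : MvPolynomial (Fin n) K |
        ∃ a : Fin n →₀ ℕ, (∑ i, a i = n) ∧ (∀ i, a i ≠ n) ∧ f = monomial a 1} := by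
  have : NeZero n := ⟨by omega⟩
  have hreindex := prod_filter_card_eq_card_sub_one fun s : Finset (Fin n) =>
    Ideal.span ((fun i => (X i : MvPolynomial (Fin n) K)) '' (s : Set (Fin n)))
  rw [Fintype.card_fin] at hreindex
  rw [hreindex, prod_span_X_image]
  congr 1
  ext f
  constructor
  · rintro ⟨c, hc, rfl⟩
    obtain ⟨hsum, hne⟩ := (Finsupp.exists_ne_self_sum_single_eq_iff _).mp
      ⟨c, fun j => by simpa using hc j, rfl⟩
    exact ⟨_, by simpa using hsum, by simpa using hne, rfl⟩
  · rintro ⟨a, hsum, hne, rfl⟩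
    obtain ⟨c, hc, rfl⟩ :=
      (Finsupp.exists_ne_self_sum_single_eq_iff a).mpr (by simpa using ⟨hsum, hne⟩)
    exact ⟨c, fun j => by simpa using hc j, rfl⟩
end

section
/- Let n ≥ 3 and let I be the product over all (n-2)-element subsets {i_1,...,i_{n-2}} of {1,...,n} of the ideals (x_{i_1},...,x_{i_{n-2}}) in k[x_1,...,x_n]. Then I is generated by all monomials x_1^{a_1}···x_n^{a_n} of degree C(n,2) such that a_i ≤ C(n-1,2) for all i and at least three of the a_i are positive. -/
/-!
Multiplying out, the product ideal is spanned by the monomials `∏ₛ x_{c(s)}`, where `c` picks a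
variable `c(s) ∈ s` from every `(n-2)`-subset `s`. By Hall's theorem applied to the family in
which variable `j` is repeated `a j` times, an exponent vector `a` arises from such a choice iff
`∑ a = #subsets` and `∑_{j ∈ U} a j ≥ C(#U, n-2)` for every set `U` of variables. Only
`#U ∈ {n-2, n-1, n}` give nontrivial conditions; they say respectively that the support of `a`
meets every `(n-2)`-set (i.e. has at least three elements), that `a j ≤ C(n,2) - (n-1) = C(n-1,2)`,
and that `∑ a = C(n,2)`.
-/

open MvPolynomial Finset

theorem MvPolynomial.prod_span_image_X {R σ ι : Type*} [CommSemiring R] [Fintype ι]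
    (S : ι → Set σ) :
    ∏ i, Ideal.span (X '' S i : Set (MvPolynomial σ R)) =
      Ideal.span {f | ∃ c : ι → σ, (∀ i, c i ∈ S i) ∧
        f = monomial (∑ i, Finsupp.single (c i) 1) 1} := by
  rw [Ideal.prod_span]
  congr 1
  ext f
  simp only [Set.mem_fintype_prod, Set.mem_ofPred_eq, monomial_sum_one, ← X.eq_def]
  constructor
  · rintro ⟨g, hg, rfl⟩
    choose c hc hgc using hg
    exact ⟨c, hc, by simp_rw [← hgc]⟩
  · rintro ⟨c, hc, rfl⟩
    exact ⟨fun i => X (c i), fun i => ⟨c i, hc i, rfl⟩, rfl⟩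

theorem Finsupp.finsetSum_single_one_apply {ι α : Type*} [DecidableEq α] (s : Finset ι)
    (c : ι → α) (j : α) : (∑ i ∈ s, single (c i) 1 : α →₀ ℕ) j = #{i ∈ s | c i = j} := by
  simp only [finsetSum_apply, single_apply, card_filter]

theorem Finset.biUnion_sigma {ι α : Type*} {β : α → Type*} [DecidableEq α]
    [DecidableEq (Σ j, β j)] (S : Finset ι) (t : ι → Finset α) (u : ∀ j, Finset (β j)) :
    S.biUnion (fun i => (t i).sigma u) = (S.biUnion t).sigma u := by
  ext ⟨j, k⟩
  simp only [mem_biUnion, mem_sigma]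
  tauto

theorem Finset.exists_mem_sum_single_eq_iff {ι α : Type*} [Fintype ι] [Fintype α]
    [DecidableEq α] (t : ι → Finset α) (a : α →₀ ℕ) :
    (∃ c : ι → α, (∀ i, c i ∈ t i) ∧ ∑ i, Finsupp.single (c i) 1 = a) ↔
      ∑ j, a j = Fintype.card ι ∧ ∀ S : Finset ι, #S ≤ ∑ j ∈ S.biUnion t, a j := by
  classical
  simp only [Finsupp.ext_iff, Finsupp.finsetSum_single_one_apply]
  constructor
  · rintro ⟨c, hc, hca⟩
    simp only [← hca, sum_card_fiberwise_eq_card_filter, mem_univ, filter_true, card_univ,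
      true_and]
    exact fun S => card_le_card fun i hi => mem_filter.2 ⟨mem_univ i, mem_biUnion.2 ⟨i, hi, hc i⟩⟩
  · rintro ⟨hsum, hall⟩
    -- Hall's theorem for the family in which each `j ∈ t i` is repeated `a j` times.
    obtain ⟨f, hf, hft⟩ := (all_card_le_biUnion_card_iff_exists_injective
      fun i => (t i).sigma fun j => range (a j)).1 fun S => by
        simpa [biUnion_sigma, card_sigma] using hall S
    refine ⟨fun i => (f i).1, fun i => (mem_sigma.1 (hft i)).1, ?_⟩
    have hle : ∀ j, #{i | (f i).1 = j} ≤ a j := fun j => by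
      simpa using card_le_card_of_injOn (t := range (a j)) (fun i => (f i).2)
        (fun i hi => by simpa [← (mem_filter.1 hi).2] using (mem_sigma.1 (hft i)).2)
        (fun i hi i' hi' h => hf (Sigma.ext ((mem_filter.1 hi).2.trans (mem_filter.1 hi').2.symm)
          (heq_of_eq h)))
    refine fun j => (sum_eq_sum_iff_of_le fun j _ => hle j).1 ?_ j (mem_univ j)
    rw [sum_card_fiberwise_eq_card_filter, hsum]
    simp

theorem Finset.forall_card_le_sum_biUnion_val_iff {α : Type*} [DecidableEq α] (r : ℕ)
    (a : α → ℕ) :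
    (∀ S : Finset {s : Finset α // #s = r}, #S ≤ ∑ j ∈ S.biUnion Subtype.val, a j) ↔
      ∀ U : Finset α, (#U).choose r ≤ ∑ j ∈ U, a j := by
  constructor
  · intro hall U
    have hS := hall ((powersetCard r U).subtype fun s => #s = r)
    rw [card_subtype, filter_true_of_mem fun s hs => (mem_powersetCard.1 hs).2,
      card_powersetCard] at hS
    refine hS.trans (sum_le_sum_of_subset fun j hj => ?_)
    obtain ⟨s, hs, hjs⟩ := mem_biUnion.1 hj
    exact (mem_powersetCard.1 (mem_subtype.1 hs)).1 hjs
  · intro hU S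
    refine le_trans ?_ (hU _)
    rw [← card_powersetCard]
    exact card_le_card_of_injOn Subtype.val
      (fun s hs => mem_powersetCard.2 ⟨subset_biUnion_of_mem Subtype.val hs, s.2⟩)
      Subtype.val_injective.injOn

section CardAddTwo

variable {α : Type*} [Fintype α] [DecidableEq α] {r : ℕ} {a : α →₀ ℕ}

theorem le_choose_two_of_forall_choose_le_sum (hα : Fintype.card α = r + 2)
    (hsum : ∑ j, a j = (r + 2).choose 2) (hU : ∀ U : Finset α, (#U).choose r ≤ ∑ j ∈ U, a j)
    (i : α) : a i ≤ (r + 1).choose 2 := by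
  have hi := hU (univ.erase i)
  rw [card_erase_of_mem (mem_univ i), card_univ, hα, show r + 2 - 1 = r + 1 by omega,
    Nat.choose_succ_self_right] at hi
  have hsplit := add_sum_erase univ a (mem_univ i)
  have hpascal : (r + 2).choose 2 = r + 1 + (r + 1).choose 2 := by
    rw [Nat.choose_succ_succ', Nat.choose_one_right]
  omega

theorem three_le_card_support_of_forall_choose_le_sum (hα : Fintype.card α = r + 2)
    (hU : ∀ U : Finset α, (#U).choose r ≤ ∑ j ∈ U, a j) : 3 ≤ #a.support := by
  by_contra! hsupp
  obtain ⟨T, hsuppT, -, hT⟩ := exists_subsuperset_card_eq (subset_univ a.support)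
    (Nat.le_of_lt_succ hsupp) (by rw [card_univ, hα]; omega)
  have hTc := hU Tᶜ
  rw [card_compl, hT, hα, Nat.add_sub_cancel, Nat.choose_self,
    sum_eq_zero fun j hj => Finsupp.notMem_support_iff.1 fun hj' => mem_compl.1 hj (hsuppT hj')]
    at hTc
  omega

theorem forall_choose_le_sum_of_le_choose_two (hα : Fintype.card α = r + 2)
    (hsum : ∑ j, a j = (r + 2).choose 2) (hle : ∀ i, a i ≤ (r + 1).choose 2)
    (hsupp : 3 ≤ #a.support) (U : Finset α) : (#U).choose r ≤ ∑ j ∈ U, a j := by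
  have hcompl : #Uᶜ + #U = r + 2 := by rw [card_compl, hα]; have := card_le_univ U; omega
  rcases Nat.lt_or_ge #U r with hlt | hge
  · simp [Nat.choose_eq_zero_of_lt hlt]
  obtain hUr | hUr1 | hUr2 : #U = r ∨ #U = r + 1 ∨ #U = r + 2 := by omega
  · obtain ⟨j, hj, hjU⟩ := not_subset.1 fun h : a.support ⊆ Uᶜ => by
      have := card_le_card h; omega
    rw [hUr, Nat.choose_self]
    exact (Finsupp.mem_support_iff.1 hj |> Nat.one_le_iff_ne_zero.2).trans
      (single_le_sum (fun _ _ => Nat.zero_le _) (by simpa using hjU))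
  · obtain ⟨j, hj⟩ := card_eq_one.1 (show #Uᶜ = 1 by omega)
    have hsplit := sum_add_sum_compl U a
    rw [hj, sum_singleton] at hsplit
    have hpascal : (r + 2).choose 2 = r + 1 + (r + 1).choose 2 := by
      rw [Nat.choose_succ_succ', Nat.choose_one_right]
    have := hle j
    rw [hUr1, Nat.choose_succ_self_right]
    omega
  · rw [eq_univ_of_card U (by rw [hUr2, hα]), card_univ, hα, hsum, Nat.choose_symm_add]

theorem forall_choose_le_sum_iff (hα : Fintype.card α = r + 2)
    (hsum : ∑ j, a j = (r + 2).choose 2) :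
    (∀ U : Finset α, (#U).choose r ≤ ∑ j ∈ U, a j) ↔
      (∀ i, a i ≤ (r + 1).choose 2) ∧ 3 ≤ #a.support :=
  ⟨fun hU => ⟨le_choose_two_of_forall_choose_le_sum hα hsum hU,
      three_le_card_support_of_forall_choose_le_sum hα hU⟩,
    fun ⟨hle, hsupp⟩ => forall_choose_le_sum_of_le_choose_two hα hsum hle hsupp⟩

theorem exists_mem_sum_single_eq_iff_of_card_eq_add_two (hα : Fintype.card α = r + 2)
    (a : α →₀ ℕ) :
    (∃ c : {s : Finset α // #s = r} → α, (∀ s, c s ∈ s.1) ∧ ∑ s, Finsupp.single (c s) 1 = a) ↔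
      ∑ j, a j = (r + 2).choose 2 ∧ (∀ i, a i ≤ (r + 1).choose 2) ∧ 3 ≤ #a.support := by
  rw [exists_mem_sum_single_eq_iff, forall_card_le_sum_biUnion_val_iff, Fintype.card_finset_len,
    hα, Nat.choose_symm_add]
  exact and_congr_right (forall_choose_le_sum_iff hα)

end CardAddTwo

/-- For n ≥ 3, the product over all (n-2)-element subsets of the variables of the ideals
generated by those variables is generated by all monomials of degree C(n,2) with all
exponents ≤ C(n-1,2) and at least three positive exponents. -/
theorem stmt_14 (K : Type*) [Field K] (n : ℕ) (hn : 3 ≤ n) :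
    (∏ s ∈ Finset.univ.filter (fun s : Finset (Fin n) => s.card = n - 2),
        Ideal.span ((fun i => (X i : MvPolynomial (Fin n) K)) '' (s : Set (Fin n)))) =
      Ideal.span {f : MvPolynomial (Fin n) K |
        ∃ a : Fin n →₀ ℕ, (∑ i, a i = n.choose 2) ∧ (∀ i, a i ≤ (n - 1).choose 2) ∧
          3 ≤ a.support.card ∧ f = monomial a 1} := by
  obtain ⟨r, rfl⟩ : ∃ r, n = r + 2 := ⟨n - 2, by omega⟩
  have hcard : Fintype.card (Fin (r + 2)) = r + 2 := Fintype.card_fin _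
  rw [Nat.add_sub_cancel, show r + 2 - 1 = r + 1 by omega,
    prod_subtype (p := fun s => #s = r) (F := inferInstance) _ fun s => by simp,
    prod_span_image_X]
  congr 1
  ext f
  constructor
  · rintro ⟨c, hc, rfl⟩
    obtain ⟨hsum, hle, hsupp⟩ :=
      (exists_mem_sum_single_eq_iff_of_card_eq_add_two hcard _).1 ⟨c, hc, rfl⟩
    exact ⟨_, hsum, hle, hsupp, rfl⟩
  · rintro ⟨a, hsum, hle, hsupp, rfl⟩
    obtain ⟨c, hc, rfl⟩ :=
      (exists_mem_sum_single_eq_iff_of_card_eq_add_two hcard a).2 ⟨hsum, hle, hsupp⟩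
    exact ⟨c, hc, rfl⟩
end

section
/- Let G be a Ferrers bipartite graph on vertex sets {x_1,...,x_n} and {y_1,...,y_m} (so if e_{ij} is an edge then e_{rs} is an edge for all r ≤ i, s ≤ j). In the polynomial ring on variables e_{ij} for edges {x_i,y_j} of G, the kernel of the monomial map e_{ij} ↦ x_i y_j is generated by the quadratic binomials e_{i1,j1}·e_{i2,j2} - e_{i1,j2}·e_{i2,j1} (over pairs of edges for which all four are edges of G). -/
/-!
The edge map sends the monomial `x^d` of a multiset `d` of edges to the monomial of the degree
vector of `d`, so its kernel is spanned by the binomials `x^d - x^d'` with `d`, `d'` of equal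
degree vectors. Such a binomial is reduced by induction on `deg d`: take an edge `(i, j)` of `d`
with `i` maximal. If `d'` does not contain it, it contains edges `(i, j₁)` and `(i₂, j)`, and
`i₂ ≤ i` because row `i₂` also occurs in `d`; so `(i₂, j₁)` is an edge by the Ferrers property and
one quadric trades `(i, j₁), (i₂, j)` for `(i, j), (i₂, j₁)`. Now `(i, j)` cancels on both sides.
-/

open MvPolynomial

namespace MvPolynomial

variable {σ M R : Type*} [CommRing R]

theorem mem_ideal_of_mapDomain_eq_zero (Φ : (σ →₀ ℕ) → M) {I : Ideal (MvPolynomial σ R)}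
    (hI : ∀ d d', Φ d = Φ d' → monomial d (1 : R) - monomial d' 1 ∈ I)
    {p : MvPolynomial σ R} (hp : AddMonoidAlgebra.mapDomain Φ p = 0) : p ∈ I := by
  -- modulo `I`, `p` equals its push-forward along `r ∘ Φ` for a section `r` of `Φ`, which is `0`
  let r := Function.invFun Φ
  have hsub (q : MvPolynomial σ R) : q - AddMonoidAlgebra.mapDomain (r ∘ Φ) q ∈ I := by
    induction q using induction_on' with
    | monomial d c =>
      rw [← single_eq_monomial, AddMonoidAlgebra.mapDomain_single, single_eq_monomial,
        single_eq_monomial, ← mul_one c, ← smul_eq_mul, map_smul, map_smul, ← smul_sub]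
      exact Submodule.smul_of_tower_mem _ c (hI _ _ (Function.invFun_eq ⟨d, rfl⟩).symm)
    | add q q' hq hq' =>
      rw [AddMonoidAlgebra.mapDomain_add, add_sub_add_comm]
      exact add_mem hq hq'
  have hcomp : AddMonoidAlgebra.mapDomain (r ∘ Φ) p = 0 := by
    have : AddMonoidAlgebra.mapDomain (r ∘ Φ) p =
        AddMonoidAlgebra.mapDomain r (AddMonoidAlgebra.mapDomain Φ p) :=
      AddMonoidAlgebra.coeff_injective (by simp [Finsupp.mapDomain_comp])
    rw [this, hp, AddMonoidAlgebra.mapDomain_zero]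
  simpa [hcomp] using hsub p

end MvPolynomial

namespace BipartiteGraph

variable {α β : Type*} {E : Set (α × β)}

noncomputable def degreeVector (E : Set (α × β)) : (E →₀ ℕ) →+ (α ⊕ β →₀ ℕ) :=
  Finsupp.mapDomain.addMonoidHom (fun e : E => Sum.inl e.1.1) +
    Finsupp.mapDomain.addMonoidHom (fun e : E => Sum.inr e.1.2)

theorem degreeVector_single (e : E) (k : ℕ) :
    degreeVector E (Finsupp.single e k) =
      Finsupp.single (Sum.inl e.1.1) k + Finsupp.single (Sum.inr e.1.2) k := by
  simp [degreeVector]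

theorem degreeVector_inl (d : E →₀ ℕ) (i : α) :
    degreeVector E d (Sum.inl i) = Finsupp.mapDomain (fun e : E => e.1.1) d i := by
  have hcomp : (fun e : E => (Sum.inl e.1.1 : α ⊕ β)) = Sum.inl ∘ fun e : E => e.1.1 := rfl
  simp [degreeVector, hcomp, Finsupp.mapDomain_comp, Finsupp.mapDomain_apply Sum.inl_injective,
    Finsupp.mapDomain_of_notMem_range]

theorem degreeVector_inr (d : E →₀ ℕ) (j : β) :
    degreeVector E d (Sum.inr j) = Finsupp.mapDomain (fun e : E => e.1.2) d j := by
  have hcomp : (fun e : E => (Sum.inr e.1.2 : α ⊕ β)) = Sum.inr ∘ fun e : E => e.1.2 := rfl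
  simp [degreeVector, hcomp, Finsupp.mapDomain_comp, Finsupp.mapDomain_apply Sum.inr_injective,
    Finsupp.mapDomain_of_notMem_range]

theorem degreeVector_inl_ne_zero {d : E →₀ ℕ} {i : α} :
    degreeVector E d (Sum.inl i) ≠ 0 ↔ ∃ e ∈ d.support, e.1.1 = i := by
  classical
  rw [degreeVector_inl, ← Finsupp.mem_support_iff,
    Finsupp.mapDomain_support_of_subsingletonAddUnits, Finset.mem_image]

theorem degreeVector_inr_ne_zero {d : E →₀ ℕ} {j : β} :
    degreeVector E d (Sum.inr j) ≠ 0 ↔ ∃ e ∈ d.support, e.1.2 = j := by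
  classical
  rw [degreeVector_inr, ← Finsupp.mem_support_iff,
    Finsupp.mapDomain_support_of_subsingletonAddUnits, Finset.mem_image]

theorem degreeVector_eq_zero {d : E →₀ ℕ} (h : degreeVector E d = 0) : d = 0 := by
  ext e
  by_contra he
  exact degreeVector_inl_ne_zero.2 ⟨e, Finsupp.mem_support_iff.2 he, rfl⟩
    (by rw [h, Finsupp.zero_apply])

def quadrics (K : Type*) [CommRing K] (E : Set (α × β)) : Set (MvPolynomial E K) :=
  {q | ∃ (i₁ i₂ : α) (j₁ j₂ : β) (h₁₁ : (i₁, j₁) ∈ E) (h₂₂ : (i₂, j₂) ∈ E)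
      (h₁₂ : (i₁, j₂) ∈ E) (h₂₁ : (i₂, j₁) ∈ E),
      q = X ⟨(i₁, j₁), h₁₁⟩ * X ⟨(i₂, j₂), h₂₂⟩ - X ⟨(i₁, j₂), h₁₂⟩ * X ⟨(i₂, j₁), h₂₁⟩}

variable {K : Type*} [CommRing K]

theorem exists_exchange [LinearOrder α] (hE : ∀ i j r, (i, j) ∈ E → r ≤ i → (r, j) ∈ E)
    {d d' : E →₀ ℕ} (h : degreeVector E d = degreeVector E d') {e : E} (he : e ∈ d.support)
    (hmax : ∀ e' ∈ d.support, e'.1.1 ≤ e.1.1) :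
    ∃ d'', degreeVector E d'' = degreeVector E d' ∧ d'' e ≠ 0 ∧
      monomial d' (1 : K) - monomial d'' 1 ∈ Ideal.span (quadrics K E) := by
  by_cases hd' : d' e ≠ 0
  · exact ⟨d', rfl, hd', by simp⟩
  obtain ⟨⟨i, j⟩, hij⟩ := e
  obtain ⟨⟨⟨i, j₁⟩, hij₁⟩, he₁, rfl⟩ := degreeVector_inl_ne_zero.1 <|
    h ▸ degreeVector_inl_ne_zero.2 ⟨_, he, rfl⟩
  obtain ⟨⟨⟨i₂, j⟩, hi₂j⟩, he₂, rfl⟩ := degreeVector_inr_ne_zero.1 <|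
    h ▸ degreeVector_inr_ne_zero.2 ⟨_, he, rfl⟩
  have hne : (⟨(i, j₁), hij₁⟩ : E) ≠ ⟨(i₂, j), hi₂j⟩ := by
    rintro ⟨⟩
    exact hd' (Finsupp.mem_support_iff.1 he₁)
  have hi₂ : i₂ ≤ i := by
    obtain ⟨e₃, he₃, hrow⟩ := degreeVector_inl_ne_zero.1 <|
      h.symm ▸ degreeVector_inl_ne_zero.2 ⟨_, he₂, rfl⟩
    simpa [hrow] using hmax e₃ he₃
  set e₁ : E := ⟨(i, j₁), hij₁⟩
  set e₂ : E := ⟨(i₂, j), hi₂j⟩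
  set e₄ : E := ⟨(i₂, j₁), hE i j₁ i₂ hij₁ hi₂⟩
  obtain ⟨d₁, rfl⟩ := exists_add_of_le <| Finsupp.single_le_iff.2 <|
    Nat.one_le_iff_ne_zero.2 (Finsupp.mem_support_iff.1 he₁)
  have hd₁ : d₁ e₂ ≠ 0 := by
    simpa [Finsupp.single_apply, hne] using Finsupp.mem_support_iff.1 he₂
  obtain ⟨d₀, rfl⟩ := exists_add_of_le <| Finsupp.single_le_iff.2 <| Nat.one_le_iff_ne_zero.2 hd₁
  refine ⟨Finsupp.single ⟨(i, j), hij⟩ 1 + (Finsupp.single e₄ 1 + d₀), ?_, by simp, ?_⟩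
  · simp only [map_add, degreeVector_single]
    abel
  · have hq : X e₁ * X e₂ - X ⟨(i, j), hij⟩ * X e₄ ∈ quadrics K E :=
      ⟨i, i₂, j₁, j, hij₁, hi₂j, hij, e₄.2, rfl⟩
    have hfactor : monomial (Finsupp.single e₁ 1 + (Finsupp.single e₂ 1 + d₀)) (1 : K) -
        monomial (Finsupp.single ⟨(i, j), hij⟩ 1 + (Finsupp.single e₄ 1 + d₀)) 1 =
        (X e₁ * X e₂ - X ⟨(i, j), hij⟩ * X e₄) * monomial d₀ 1 := by
      simp only [monomial_single_add, pow_one]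
      ring
    rw [hfactor]
    exact Ideal.mul_mem_right _ _ (Ideal.subset_span hq)

theorem monomial_sub_monomial_mem_span_quadrics [LinearOrder α]
    (hE : ∀ i j r, (i, j) ∈ E → r ≤ i → (r, j) ∈ E) {d d' : E →₀ ℕ}
    (h : degreeVector E d = degreeVector E d') :
    monomial d (1 : K) - monomial d' 1 ∈ Ideal.span (quadrics K E) := by
  induction hdeg : d.degree generalizing d d' with
  | zero =>
    obtain rfl := (Finsupp.degree_eq_zero_iff d).1 hdeg
    obtain rfl := degreeVector_eq_zero (h.symm.trans (map_zero _))
    simp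
  | succ n ih =>
    have hne : d.support.Nonempty :=
      Finsupp.support_nonempty_iff.2 fun h0 => by simp [h0] at hdeg
    obtain ⟨e, he, hmax⟩ := d.support.exists_max_image (fun e => e.1.1) hne
    obtain ⟨d'', hd'', hd''e, hmem⟩ := exists_exchange (K := K) hE h he hmax
    obtain ⟨d₀, rfl⟩ := exists_add_of_le <| Finsupp.single_le_iff.2 <|
      Nat.one_le_iff_ne_zero.2 (Finsupp.mem_support_iff.1 he)
    obtain ⟨d₀'', rfl⟩ := exists_add_of_le <| Finsupp.single_le_iff.2 <|
      Nat.one_le_iff_ne_zero.2 hd''e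
    have hdeg₀ : d₀.degree = n := by
      simp only [map_add, Finsupp.degree_single] at hdeg
      omega
    have hd₀ : degreeVector E d₀ = degreeVector E d₀'' := by
      simpa only [map_add, add_right_inj] using h.trans hd''.symm
    have hsplit : monomial (Finsupp.single e 1 + d₀) (1 : K) - monomial d' 1 =
        X e * (monomial d₀ 1 - monomial d₀'' 1) -
          (monomial d' 1 - monomial (Finsupp.single e 1 + d₀'') 1) := by
      simp only [monomial_single_add, pow_one]
      ring
    rw [hsplit]
    exact sub_mem (Ideal.mul_mem_left _ _ (ih hd₀ hdeg₀)) hmem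

noncomputable def edgeMap (K : Type*) [CommRing K] (E : Set (α × β)) :
    MvPolynomial E K →ₐ[K] MvPolynomial (α ⊕ β) K :=
  aeval fun e => X (Sum.inl e.1.1) * X (Sum.inr e.1.2)

theorem edgeMap_eq_mapDomainAlgHom :
    edgeMap K E = AddMonoidAlgebra.mapDomainAlgHom K K (degreeVector E) := by
  refine algHom_ext fun e => ?_
  rw [edgeMap, aeval_X, AddMonoidAlgebra.mapDomainAlgHom_apply, X, X, X, monomial_mul, mul_one,
    ← single_eq_monomial (Finsupp.single e 1), AddMonoidAlgebra.mapDomain_single,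
    degreeVector_single, single_eq_monomial]

theorem ker_edgeMap_le_span_quadrics [LinearOrder α]
    (hE : ∀ i j r, (i, j) ∈ E → r ≤ i → (r, j) ∈ E) :
    RingHom.ker (edgeMap K E) ≤ Ideal.span (quadrics K E) := fun p hp =>
  MvPolynomial.mem_ideal_of_mapDomain_eq_zero (degreeVector E)
    (fun _ _ => monomial_sub_monomial_mem_span_quadrics hE)
    (by rwa [RingHom.mem_ker, edgeMap_eq_mapDomainAlgHom] at hp)

theorem span_quadrics_le_ker_edgeMap :
    Ideal.span (quadrics K E) ≤ RingHom.ker (edgeMap K E) := by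
  rw [Ideal.span_le]
  rintro q ⟨i₁, i₂, j₁, j₂, h₁₁, h₂₂, h₁₂, h₂₁, rfl⟩
  simp only [SetLike.mem_coe, RingHom.mem_ker, edgeMap, map_sub, map_mul, aeval_X]
  ring

end BipartiteGraph

/-- For a Ferrers bipartite graph with edge set E ⊆ Fin n × Fin m, the kernel of the
monomial map e_{ij} ↦ x_i y_j (x's = Sum.inl, y's = Sum.inr) is generated by the
quadratic binomials e_{i₁j₁} e_{i₂j₂} - e_{i₁j₂} e_{i₂j₁}. -/
theorem stmt_17 (K : Type*) [Field K] (n m : ℕ) (E : Set (Fin n × Fin m))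
    (hFerrers : ∀ i j r s, (i, j) ∈ E → r ≤ i → s ≤ j → (r, s) ∈ E) :
    RingHom.ker ((MvPolynomial.aeval
        (fun e : E => (X (Sum.inl e.1.1) * X (Sum.inr e.1.2) :
          MvPolynomial (Fin n ⊕ Fin m) K)) :
        MvPolynomial E K →ₐ[K] MvPolynomial (Fin n ⊕ Fin m) K).toRingHom) =
      Ideal.span {q : MvPolynomial E K |
        ∃ (i₁ i₂ : Fin n) (j₁ j₂ : Fin m) (h₁₁ : (i₁, j₁) ∈ E) (h₂₂ : (i₂, j₂) ∈ E)
          (h₁₂ : (i₁, j₂) ∈ E) (h₂₁ : (i₂, j₁) ∈ E),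
          q = X (⟨(i₁, j₁), h₁₁⟩ : E) * X (⟨(i₂, j₂), h₂₂⟩ : E)
              - X (⟨(i₁, j₂), h₁₂⟩ : E) * X (⟨(i₂, j₁), h₂₁⟩ : E)} :=
  le_antisymm
    (BipartiteGraph.ker_edgeMap_le_span_quadrics fun i j r h hr => hFerrers i j r j h hr le_rfl)
    BipartiteGraph.span_quadrics_le_ker_edgeMap
end

section
/- Let I ⊂ k[x_1,...,x_n] be the ideal generated by all square-free monomials of degree 2 (n ≥ 2). Then the minimal number of generators of I^k equals C(n+2k-1, n-1) - n·C(n+k-2, n-1). -/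
/-!
The monomials `x^a` with `|a| = 2k` and all `aᵢ ≤ k` generate `I^k`: subtracting `eᵢ + eⱼ` at
the two largest entries of such an `a` leaves an exponent of the same kind for `k - 1`. No
generating set `G` of `I^k` is smaller: `I^k` lives in degrees `≥ 2k`, so the degree-`2k`
components of `G` span, over `K`, every degree-`2k` element of `I^k`, in particular these
linearly independent monomials. Finally, among the `C(n+2k-1, n-1)` exponents of degree `2k`
at most one entry can exceed `k`, and those with `aᵢ > k` correspond to the exponents
`a - (k+1)eᵢ` of degree `k - 1`.
-/

open MvPolynomial Finset
open scoped Pointwise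

namespace MvPolynomial

variable {σ R : Type*} [CommSemiring R]

theorem le_degree_of_mem_ideal_span_monomial {s : Set (σ →₀ ℕ)} {d : ℕ}
    (hs : ∀ a ∈ s, a.degree = d) {f : MvPolynomial σ R}
    (hf : f ∈ Ideal.span ((fun a => monomial a (1 : R)) '' s)) {m : σ →₀ ℕ}
    (hm : m ∈ f.support) : d ≤ m.degree := by
  obtain ⟨a, ha, ham⟩ := mem_ideal_span_monomial_image.mp hf m hm
  exact hs a ha ▸ Finsupp.degree_mono ham

theorem homogeneousComponent_mul_of_le_degree {d : ℕ} (c : MvPolynomial σ R)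
    {g : MvPolynomial σ R} (hg : ∀ m ∈ g.support, d ≤ m.degree) :
    homogeneousComponent d (c * g) = constantCoeff c • homogeneousComponent d g := by
  classical
  ext m
  rw [coeff_smul, coeff_homogeneousComponent, coeff_homogeneousComponent]
  split_ifs with hm
  · rw [coeff_mul, sum_eq_single_of_mem (0, m) (by simp), constantCoeff_eq, smul_eq_mul]
    rintro ⟨u, v⟩ huv hne
    by_cases hv : coeff v g = 0
    · rw [hv, mul_zero]
    have hdeg : u.degree + v.degree = m.degree := by
      rw [← map_add, mem_antidiagonal.mp huv]
    have hu : u = 0 := (Finsupp.degree_eq_zero_iff u).mp (by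
      have := hg v (mem_support_iff.mpr hv)
      omega)
    simp_all
  · rw [smul_zero]

theorem homogeneousComponent_mem_span_of_mem_ideal_span {d : ℕ} {G : Finset (MvPolynomial σ R)}
    (hG : ∀ g ∈ G, ∀ m ∈ g.support, d ≤ m.degree) {f : MvPolynomial σ R}
    (hf : f ∈ Ideal.span (G : Set (MvPolynomial σ R))) :
    homogeneousComponent d f ∈ Submodule.span R (homogeneousComponent d '' (G : Set _)) := by
  obtain ⟨c, -, rfl⟩ := Submodule.mem_span_finset.mp hf
  rw [map_sum]
  refine Submodule.sum_mem _ fun g hg => ?_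
  rw [smul_eq_mul, homogeneousComponent_mul_of_le_degree _ (hG g hg)]
  exact Submodule.smul_mem _ _ (Submodule.subset_span ⟨g, hg, rfl⟩)

theorem card_le_card_of_ideal_span_eq_span_monomial {K : Type*} [Field K] {d : ℕ}
    {S : Finset (σ →₀ ℕ)} (hS : ∀ a ∈ S, a.degree = d) {G : Finset (MvPolynomial σ K)}
    (hG : Ideal.span (G : Set (MvPolynomial σ K)) =
      Ideal.span ((fun a => monomial a (1 : K)) '' S)) :
    #S ≤ #G := by
  classical
  set v : S → MvPolynomial σ K := fun a => monomial (a : σ →₀ ℕ) 1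
  have hGdeg : ∀ g ∈ G, ∀ m ∈ g.support, d ≤ m.degree := fun g hg _ =>
    le_degree_of_mem_ideal_span_monomial hS (hG ▸ Ideal.subset_span hg)
  have hspan : Set.range v ⊆
      Submodule.span K (G.image (homogeneousComponent d) : Set (MvPolynomial σ K)) := by
    rintro _ ⟨⟨a, ha⟩, rfl⟩
    have hmem : monomial a (1 : K) ∈ Ideal.span (G : Set (MvPolynomial σ K)) :=
      hG ▸ Ideal.subset_span ⟨a, ha, rfl⟩
    have := homogeneousComponent_mem_span_of_mem_ideal_span hGdeg hmem
    rwa [homogeneousComponent_eq_self (isHomogeneous_monomial _ (hS a ha)), ← coe_image] at this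
  have hli : LinearIndependent K v := by
    have := (basisMonomials σ K).linearIndependent.comp _ (Subtype.val_injective (p := (· ∈ S)))
    rwa [coe_basisMonomials] at this
  calc #S = Fintype.card S := (Fintype.card_coe S).symm
    _ = (Set.range v).finrank K := (finrank_span_eq_card hli).symm
    _ ≤ (G.image (homogeneousComponent d) : Set (MvPolynomial σ K)).finrank K :=
      Submodule.finrank_mono (Submodule.span_le.mpr hspan)
    _ ≤ #G := (finrank_span_finset_le_card _).trans card_image_le

theorem ideal_span_monomial_image_add (A B : Set (σ →₀ ℕ)) :
    Ideal.span ((fun a => monomial a (1 : R)) '' (A + B)) =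
      Ideal.span ((fun a => monomial a (1 : R)) '' A) *
        Ideal.span ((fun a => monomial a (1 : R)) '' B) := by
  rw [Ideal.span_mul_span', ← Set.image2_add, ← Set.image2_mul,
    Set.image_image2_distrib (f' := (· * ·)) (g₁ := fun a => monomial a (1 : R))
      (g₂ := fun a => monomial a (1 : R)) fun a b => by rw [monomial_mul, one_mul]]

end MvPolynomial

section CappedAntidiag

variable {σ : Type*} [Fintype σ]

theorem Finsupp.sum_le_degree (s : Finset σ) (a : σ →₀ ℕ) :
    ∑ i ∈ s, a i ≤ a.degree := by
  rw [Finsupp.degree_eq_sum]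
  exact sum_le_sum_of_subset (subset_univ s)

variable (σ) [DecidableEq σ]

def cappedAntidiag (k : ℕ) : Finset (σ →₀ ℕ) :=
  {a ∈ univ.finsuppAntidiag (2 * k) | ∀ i, a i ≤ k}

variable {σ}

theorem Finset.mem_univ_finsuppAntidiag {n : ℕ} {a : σ →₀ ℕ} :
    a ∈ univ.finsuppAntidiag n ↔ a.degree = n := by
  simp [Finsupp.degree_eq_sum]

theorem mem_cappedAntidiag {k : ℕ} {a : σ →₀ ℕ} :
    a ∈ cappedAntidiag σ k ↔ a.degree = 2 * k ∧ ∀ i, a i ≤ k := by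
  rw [cappedAntidiag, mem_filter, mem_univ_finsuppAntidiag]

theorem cappedAntidiag_zero : cappedAntidiag σ 0 = {0} := by
  ext a
  simp [mem_cappedAntidiag, Finsupp.degree_eq_zero_iff, DFunLike.ext_iff]

theorem add_mem_cappedAntidiag {k l : ℕ} {a b : σ →₀ ℕ} (ha : a ∈ cappedAntidiag σ k)
    (hb : b ∈ cappedAntidiag σ l) : a + b ∈ cappedAntidiag σ (k + l) := by
  rw [mem_cappedAntidiag] at *
  refine ⟨by rw [map_add, ha.1, hb.1, mul_add], fun i => ?_⟩
  rw [Finsupp.add_apply]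
  exact add_le_add (ha.2 i) (hb.2 i)

theorem single_add_single_mem_cappedAntidiag_one {i j : σ} (hij : i ≠ j) :
    Finsupp.single i 1 + Finsupp.single j 1 ∈ cappedAntidiag σ 1 := by
  rw [mem_cappedAntidiag]
  refine ⟨by simp, fun l => ?_⟩
  by_cases hi : l = i <;> by_cases hj : l = j <;> simp_all

theorem exists_add_of_mem_cappedAntidiag_succ {k : ℕ} {a : σ →₀ ℕ}
    (ha : a ∈ cappedAntidiag σ (k + 1)) :
    ∃ b ∈ cappedAntidiag σ k, ∃ c ∈ cappedAntidiag σ 1, a = b + c := by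
  obtain ⟨hdeg, hle⟩ := mem_cappedAntidiag.mp ha
  have hne : (univ : Finset σ).Nonempty := by
    by_contra h
    simp [Finsupp.degree_eq_sum, not_nonempty_iff_eq_empty.mp h] at hdeg
  obtain ⟨i, -, hi⟩ := exists_max_image univ a hne
  have hrest := add_sum_erase univ a (mem_univ i)
  rw [← Finsupp.degree_eq_sum, hdeg] at hrest
  have hne' : (univ.erase i).Nonempty := by
    by_contra h
    rw [not_nonempty_iff_eq_empty.mp h, sum_empty] at hrest
    linarith [hle i]
  obtain ⟨j, hj, hjmax⟩ := exists_max_image (univ.erase i) a hne'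
  have hji : j ≠ i := ne_of_mem_erase hj
  have hj1 : 1 ≤ a j := by
    by_contra! h
    rw [sum_eq_zero fun l hl => by have := hjmax l hl; omega] at hrest
    linarith [hle i]
  have hi1 : 1 ≤ a i := hj1.trans (hi j (mem_univ j))
  -- a third entry equal to `k + 1` would force `a i + a j + a l ≥ 3 (k + 1) > a.degree`
  have hsmall : ∀ l, l ≠ i → l ≠ j → a l ≤ k := by
    intro l hli hlj
    by_contra! h
    have h3 := Finsupp.sum_le_degree {i, j, l} a
    rw [sum_insert (by simp [hji.symm, Ne.symm hli]), sum_pair (Ne.symm hlj), hdeg] at h3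
    linarith [hi l (mem_univ l), hjmax l (mem_erase.mpr ⟨hli, mem_univ l⟩)]
  set c := Finsupp.single i 1 + Finsupp.single j 1
  have hc : c ∈ cappedAntidiag σ 1 := single_add_single_mem_cappedAntidiag_one hji.symm
  have hca : c ≤ a := fun l => by
    by_cases hli : l = i <;> by_cases hlj : l = j <;> simp_all [c]
  have hdecomp : a = (a - c) + c := (tsub_add_cancel_of_le hca).symm
  refine ⟨a - c, mem_cappedAntidiag.mpr ⟨?_, fun l => ?_⟩, c, hc, hdecomp⟩
  · have := congrArg Finsupp.degree hdecomp
    rw [map_add, (mem_cappedAntidiag.mp hc).1, hdeg] at this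
    omega
  · have := hle l
    rw [Finsupp.tsub_apply]
    by_cases hli : l = i
    · subst hli; simp [c, hji.symm]; omega
    by_cases hlj : l = j
    · subst hlj; simp [c, hli]; omega
    · exact (Nat.sub_le _ _).trans (hsmall l hli hlj)

theorem coe_cappedAntidiag_succ (k : ℕ) :
    (cappedAntidiag σ (k + 1) : Set (σ →₀ ℕ)) =
      (cappedAntidiag σ k : Set (σ →₀ ℕ)) + cappedAntidiag σ 1 := by
  ext a
  refine ⟨fun ha => ?_, ?_⟩
  · obtain ⟨b, hb, c, hc, rfl⟩ := exists_add_of_mem_cappedAntidiag_succ ha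
    exact Set.add_mem_add hb hc
  · rintro ⟨b, hb, c, hc, rfl⟩
    exact add_mem_cappedAntidiag hb hc

theorem monomial_image_cappedAntidiag_one (R : Type*) [CommSemiring R] :
    (fun a => monomial a (1 : R)) '' cappedAntidiag σ 1 =
      {f | ∃ s : Finset σ, #s = 2 ∧ f = ∏ i ∈ s, X i} := by
  ext f
  constructor
  · rintro ⟨a, ha, rfl⟩
    obtain ⟨hdeg, hle⟩ := mem_cappedAntidiag.mp ha
    have hone : ∀ i ∈ a.support, a i = 1 := fun i hi => by
      have := Finsupp.mem_support_iff.mp hi; have := hle i; omega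
    refine ⟨a.support, ?_, ?_⟩
    · rwa [Finsupp.degree_apply, sum_congr rfl hone, ← card_eq_sum_ones] at hdeg
    · show monomial a 1 = _
      rw [← prod_X_pow_eq_monomial]
      exact prod_congr rfl fun i hi => by rw [hone i hi, pow_one]
  · rintro ⟨s, hs, rfl⟩
    refine ⟨∑ i ∈ s, Finsupp.single i 1, mem_cappedAntidiag.mpr ⟨?_, fun j => ?_⟩, ?_⟩
    · simp [hs]
    · rw [Finsupp.finsetSum_apply]
      simp only [Finsupp.single_apply, sum_ite_eq']
      split_ifs <;> omega
    · simp only [monomial_sum_one, X]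

theorem ideal_span_monomial_image_cappedAntidiag (R : Type*) [CommSemiring R] (k : ℕ) :
    Ideal.span ((fun a => monomial a (1 : R)) '' cappedAntidiag σ k) =
      Ideal.span {f | ∃ s : Finset σ, #s = 2 ∧ f = ∏ i ∈ s, X i} ^ k := by
  induction k with
  | zero =>
    rw [cappedAntidiag_zero, pow_zero, coe_singleton, Set.image_singleton, ← one_def,
      Ideal.one_eq_top, Ideal.span_singleton_one]
  | succ k ih =>
    rw [coe_cappedAntidiag_succ, ideal_span_monomial_image_add, ih,
      monomial_image_cappedAntidiag_one, pow_succ]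

theorem card_filter_lt_apply_finsuppAntidiag (t m : ℕ) (i : σ) :
    #{a ∈ (univ : Finset σ).finsuppAntidiag (t + 1 + m) | t < a i} =
      #((univ : Finset σ).finsuppAntidiag m) := by
  refine card_nbij' (· - Finsupp.single i (t + 1)) (· + Finsupp.single i (t + 1))
    (fun a ha => ?_) (fun b hb => ?_) (fun a ha => ?_) (fun b _ => add_tsub_cancel_right b _)
  · simp only [coe_filter, mem_univ_finsuppAntidiag, Set.mem_ofPred_eq, mem_coe] at ha ⊢
    have hle : Finsupp.single i (t + 1) ≤ a := Finsupp.single_le_iff.mpr ha.2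
    have hdecomp := congrArg Finsupp.degree (tsub_add_cancel_of_le hle)
    rw [map_add, Finsupp.degree_single, ha.1] at hdecomp
    omega
  · simp only [coe_filter, mem_univ_finsuppAntidiag, Set.mem_ofPred_eq, mem_coe] at hb ⊢
    simp [hb, add_comm]
    omega
  · simp only [coe_filter, Set.mem_ofPred_eq] at ha
    have hle : Finsupp.single i (t + 1) ≤ a := Finsupp.single_le_iff.mpr ha.2
    exact tsub_add_cancel_of_le hle

theorem card_filter_exists_lt_apply_finsuppAntidiag {t m : ℕ} (hm : m ≤ t) :
    #{a ∈ (univ : Finset σ).finsuppAntidiag (t + 1 + m) | ∃ i, t < a i} =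
      Fintype.card σ * #((univ : Finset σ).finsuppAntidiag m) := by
  have hunion : {a ∈ (univ : Finset σ).finsuppAntidiag (t + 1 + m) | ∃ i, t < a i} =
      univ.biUnion fun i => {a ∈ univ.finsuppAntidiag (t + 1 + m) | t < a i} := by
    ext a
    simp
  -- two entries above `t` would already exceed the total degree `t + 1 + m ≤ 2 t + 1`
  have hdisj : ((univ : Finset σ) : Set σ).PairwiseDisjoint
      fun i => {a ∈ (univ : Finset σ).finsuppAntidiag (t + 1 + m) | t < a i} := by
    intro i _ j _ hij
    refine disjoint_filter.mpr fun a ha hi hj => ?_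
    have := Finsupp.sum_le_degree {i, j} a
    rw [sum_pair hij, mem_univ_finsuppAntidiag.mp ha] at this
    omega
  rw [hunion, card_biUnion hdisj]
  simp [card_filter_lt_apply_finsuppAntidiag]

theorem card_cappedAntidiag (hσ : 2 ≤ Fintype.card σ) (k : ℕ) :
    (#(cappedAntidiag σ k) : ℤ) =
      ((Fintype.card σ + 2 * k - 1).choose (Fintype.card σ - 1) : ℤ) -
        Fintype.card σ * (Fintype.card σ + k - 2).choose (Fintype.card σ - 1) := by
  set n := Fintype.card σ with hn
  rcases k with _ | m
  · simp [cappedAntidiag_zero, Nat.choose_eq_zero_of_lt (show n - 2 < n - 1 by omega)]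
  have hsplit : #(cappedAntidiag σ (m + 1)) +
      #{a ∈ (univ : Finset σ).finsuppAntidiag (m + 1 + 1 + m) | ∃ i, m + 1 < a i} =
        #((univ : Finset σ).finsuppAntidiag (m + 1 + 1 + m)) := by
    rw [cappedAntidiag, show 2 * (m + 1) = m + 1 + 1 + m by ring]
    simpa only [not_forall, not_le] using
      card_filter_add_card_filter_not (s := univ.finsuppAntidiag (m + 1 + 1 + m))
        (fun a : σ →₀ ℕ => ∀ i, a i ≤ m + 1)
  rw [card_filter_exists_lt_apply_finsuppAntidiag (Nat.le_succ m),
    card_finsuppAntidiag_nat_eq_choose, card_finsuppAntidiag_nat_eq_choose, card_univ,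
    ← hn] at hsplit
  have hall : (n + (m + 1 + 1 + m) - 1).choose (m + 1 + 1 + m) =
      (n + 2 * (m + 1) - 1).choose (n - 1) := by
    rw [show n + 2 * (m + 1) - 1 = m + 1 + 1 + m + (n - 1) by omega,
      show n + (m + 1 + 1 + m) - 1 = m + 1 + 1 + m + (n - 1) by omega, Nat.choose_symm_add]
  have hlarge : (n + m - 1).choose m = (n + (m + 1) - 2).choose (n - 1) := by
    rw [show n + (m + 1) - 2 = m + (n - 1) by omega,
      show n + m - 1 = m + (n - 1) by omega, Nat.choose_symm_add]
  rw [← hall, ← hlarge, ← hsplit]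
  push_cast
  ring

end CappedAntidiag

theorem stmt_19_general (K : Type*) [Field K] (n k : ℕ) (hn : 2 ≤ n) :
    ∃ G : Finset (MvPolynomial (Fin n) K),
      Ideal.span (G : Set (MvPolynomial (Fin n) K)) =
        (Ideal.span {f : MvPolynomial (Fin n) K |
          ∃ s : Finset (Fin n), s.card = 2 ∧ f = ∏ i ∈ s, X i}) ^ k ∧
      (∀ G' : Finset (MvPolynomial (Fin n) K),
        Ideal.span (G' : Set (MvPolynomial (Fin n) K)) =
          (Ideal.span {f : MvPolynomial (Fin n) K |
            ∃ s : Finset (Fin n), s.card = 2 ∧ f = ∏ i ∈ s, X i}) ^ k →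
        G.card ≤ G'.card) ∧
      (G.card : ℤ) = ((n + 2 * k - 1).choose (n - 1) : ℤ)
        - n * ((n + k - 2).choose (n - 1)) := by
  classical
  have hcard : #((cappedAntidiag (Fin n) k).image fun a => monomial a (1 : K)) =
      #(cappedAntidiag (Fin n) k) :=
    card_image_of_injective _ (monomial_left_injective one_ne_zero)
  refine ⟨(cappedAntidiag (Fin n) k).image fun a => monomial a (1 : K), ?_, fun G hG => ?_, ?_⟩
  · rw [coe_image, ideal_span_monomial_image_cappedAntidiag]
  · rw [hcard]
    exact card_le_card_of_ideal_span_eq_span_monomial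
      (fun a ha => (mem_cappedAntidiag.mp ha).1)
      (hG.trans (ideal_span_monomial_image_cappedAntidiag K k).symm)
  · rw [hcard, card_cappedAntidiag (by simpa using hn), Fintype.card_fin]

/-- For the ideal I generated by all square-free monomials of degree 2 in n ≥ 2 variables,
the minimal number of generators of I^k equals C(n+2k-1, n-1) - n·C(n+k-2, n-1). -/
theorem stmt_19 (K : Type*) [Field K] (n k : ℕ) (hn : 2 ≤ n) (hk : 1 ≤ k) :
    ∃ G : Finset (MvPolynomial (Fin n) K),
      Ideal.span (G : Set (MvPolynomial (Fin n) K)) =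
        (Ideal.span {f : MvPolynomial (Fin n) K |
          ∃ s : Finset (Fin n), s.card = 2 ∧ f = ∏ i ∈ s, X i}) ^ k ∧
      (∀ G' : Finset (MvPolynomial (Fin n) K),
        Ideal.span (G' : Set (MvPolynomial (Fin n) K)) =
          (Ideal.span {f : MvPolynomial (Fin n) K |
            ∃ s : Finset (Fin n), s.card = 2 ∧ f = ∏ i ∈ s, X i}) ^ k →
        G.card ≤ G'.card) ∧
      (G.card : ℤ) = ((n + 2 * k - 1).choose (n - 1) : ℤ)
        - n * ((n + k - 2).choose (n - 1)) :=
  stmt_19_general K n k hn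
end
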